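/- Let X and Y be smooth normed spaces over 𝔽 with unique compatible semi-inner products, and let f : X → Y be a surjective map satisfying |[f(x), f(y)]| = |[x, y]| for all x, y ∈ X. Then for every scalar λ ∈ 𝔽 and every x ∈ X there exists γ ∈ 𝔽 with |γ| = |λ| such that f(λ x) = γ f(x). -/

import Mathlib

open RCLike

/-- A support functional at `x`: a norm-one continuous linear functional with `φ x = ‖x‖`. -/
def SuppFunc (𝕜 : Type*) [RCLike 𝕜] {X : Type*} [NormedAddCommGroup X] [NormedSpace 𝕜 X]
    (x : X) (φ : X →L[𝕜] 𝕜) : Prop :=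
  ‖φ‖ = 1 ∧ φ x = (‖x‖ : 𝕜)

/-- `X` is smooth at `x` if there is a unique support functional at `x`. -/
def NormSmoothAt (𝕜 : Type*) [RCLike 𝕜] {X : Type*} [NormedAddCommGroup X] [NormedSpace 𝕜 X]
    (x : X) : Prop := ∃! φ : X →L[𝕜] 𝕜, SuppFunc 𝕜 x φ

/-- `X` is smooth if it is smooth at every nonzero point. -/
def NormSmooth (𝕜 : Type*) (X : Type*) [RCLike 𝕜] [NormedAddCommGroup X] [NormedSpace 𝕜 X] :
    Prop := ∀ x : X, x ≠ 0 → NormSmoothAt 𝕜 x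

/-- `sip` is the canonical semi-inner product `[u,v] = ‖v‖ * φ_v u` built from support
functionals (on a smooth space this pins `sip` down uniquely). -/
def IsCompatSIP (𝕜 : Type*) {X : Type*} [RCLike 𝕜] [NormedAddCommGroup X] [NormedSpace 𝕜 X]
    (sip : X → X → 𝕜) : Prop :=
  (∀ u : X, sip u 0 = 0) ∧
  ∀ (u v : X) (φ : X →L[𝕜] 𝕜), SuppFunc 𝕜 v φ → sip u v = (‖v‖ : 𝕜) * φ u

/-- Birkhoff–James orthogonality: `x ⊥ y` iff `‖x + a • y‖ ≥ ‖x‖` for all scalars. -/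
def BJOrth (𝕜 : Type*) {X : Type*} [RCLike 𝕜] [NormedAddCommGroup X] [NormedSpace 𝕜 X]
    (x y : X) : Prop := ∀ a : 𝕜, ‖x‖ ≤ ‖x + a • y‖

/-- A semi-inner product compatible with the norm: additive and homogeneous in the first
variable, conjugate-homogeneous in the second, positive definite, Cauchy–Schwarz, and
`[x,x] = ‖x‖²`. -/
def IsSIP (𝕜 : Type*) {X : Type*} [RCLike 𝕜] [NormedAddCommGroup X] [NormedSpace 𝕜 X]
    (sip : X → X → 𝕜) : Prop :=
  (∀ x y z : X, sip (x + y) z = sip x z + sip y z) ∧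
  (∀ (a : 𝕜) (x y : X), sip (a • x) y = a * sip x y) ∧
  (∀ (a : 𝕜) (x y : X), sip x (a • y) = (starRingEnd 𝕜) a * sip x y) ∧
  (∀ x : X, x ≠ 0 → 0 < re (sip x x) ∧ im (sip x x) = 0) ∧
  (∀ x y : X, ‖sip x y‖ ≤ Real.sqrt (re (sip x x)) * Real.sqrt (re (sip y y))) ∧
  (∀ x : X, sip x x = (‖x‖ : 𝕜) ^ 2)

/-! If `f (l • x)` were not a multiple of `f x`, let `w = f (l • x) + t • f x` be a point of
minimal norm on that line, so that `w` is Birkhoff–James orthogonal to `f x`. Hahn–Banach in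
the quotient by `𝕜 ∙ f x`, whose norm at `w` is then `‖w‖`, gives a support functional `φ` at `w`
with `φ (f x) = 0`, i.e. `[f x, w] = 0`. Since `f` preserves `|[·,·]|` and is onto, this forces
`[x, y] = 0` for `f y = w`, hence `[l • x, y] = 0` and `[f (l • x), w] = 0`; so `φ` also kills
`f (l • x)` and therefore `w`, contradicting `φ w = ‖w‖ ≠ 0`. Comparing norms gives `‖γ‖ = ‖l‖`. -/

section NormedSpace

variable {𝕜 : Type*} [RCLike 𝕜] {E : Type*} [NormedAddCommGroup E] [NormedSpace 𝕜 E]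

theorem SuppFunc.of_norm_le_one {x : E} {φ : E →L[𝕜] 𝕜} (hx : x ≠ 0) (hφ : ‖φ‖ ≤ 1)
    (hφx : φ x = ‖x‖) : SuppFunc 𝕜 x φ := by
  refine ⟨hφ.antisymm ?_, hφx⟩
  have h := φ.le_opNorm x
  rw [hφx, norm_algebraMap', norm_norm] at h
  exact one_le_of_le_mul_right₀ (norm_pos_iff.2 hx) h

theorem exists_suppFunc {x : E} (hx : x ≠ 0) : ∃ φ : E →L[𝕜] 𝕜, SuppFunc 𝕜 x φ :=
  exists_dual_vector 𝕜 x (norm_ne_zero_iff.2 hx)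

theorem exists_bjOrth_add_smul (v u : E) : ∃ t : 𝕜, BJOrth 𝕜 (v + t • u) u := by
  have hcoercive : ∀ᶠ t : 𝕜 in Filter.cocompact 𝕜, ‖v + (0 : 𝕜) • u‖ ≤ ‖v + t • u‖ := by
    rcases eq_or_ne u 0 with rfl | hu
    · simp
    filter_upwards [tendsto_norm_cocompact_atTop.eventually_ge_atTop (2 * ‖v‖ / ‖u‖)] with t ht
    rw [div_le_iff₀ (norm_pos_iff.2 hu)] at ht
    have htri := norm_le_insert' (t • u) (-v)
    rw [norm_smul, norm_neg, sub_neg_eq_add, add_comm (t • u)] at htri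
    rw [zero_smul, add_zero]
    linarith
  obtain ⟨t, ht⟩ :=
    (by fun_prop : Continuous fun t : 𝕜 => ‖v + t • u‖).exists_forall_le' 0 hcoercive
  exact ⟨t, fun a => (ht (t + a)).trans_eq (by rw [add_smul, add_assoc])⟩

theorem BJOrth.exists_suppFunc_eq_zero {w u : E} (hw : w ≠ 0) (h : BJOrth 𝕜 w u) :
    ∃ φ : E →L[𝕜] 𝕜, SuppFunc 𝕜 w φ ∧ φ u = 0 := by
  set S := 𝕜 ∙ u
  have hq : ‖(Submodule.Quotient.mk w : E ⧸ S)‖ = ‖w‖ := by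
    refine (Submodule.Quotient.norm_mk_le S w).antisymm <|
      QuotientAddGroup.le_norm_iff.2 fun m hm => ?_
    obtain ⟨a, ha⟩ := Submodule.mem_span_singleton.1 ((Submodule.Quotient.eq S).1 hm)
    simpa [ha] using h a
  obtain ⟨ψ, hψ, hψw⟩ :=
    exists_dual_vector 𝕜 (Submodule.Quotient.mk w : E ⧸ S) (hq ▸ norm_ne_zero_iff.2 hw)
  rw [hq] at hψw
  have hu : (Submodule.Quotient.mk u : E ⧸ S) = 0 :=
    (Submodule.Quotient.mk_eq_zero S).2 (Submodule.mem_span_singleton_self u)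
  refine ⟨ψ.comp S.mkQL, .of_norm_le_one hw ?_ (by simpa using hψw), by simp [hu]⟩
  refine (ψ.comp S.mkQL).opNorm_le_bound zero_le_one fun x => ?_
  rw [one_mul]
  exact (ψ.le_opNorm _).trans (by rw [hψ, one_mul]; exact Submodule.Quotient.norm_mk_le S x)

namespace IsCompatSIP

variable {sip : E → E → 𝕜}

theorem sip_self (h : IsCompatSIP 𝕜 sip) (x : E) : sip x x = (‖x‖ : 𝕜) ^ 2 := by
  rcases eq_or_ne x 0 with rfl | hx
  · simp [h.1]
  obtain ⟨φ, hφ⟩ := exists_suppFunc (𝕜 := 𝕜) hx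
  rw [h.2 x x φ hφ, hφ.2, sq]

theorem norm_sip_self (h : IsCompatSIP 𝕜 sip) (x : E) : ‖sip x x‖ = ‖x‖ ^ 2 := by
  simp [h.sip_self]

theorem sip_smul_left (h : IsCompatSIP 𝕜 sip) (a : 𝕜) (x y : E) :
    sip (a • x) y = a * sip x y := by
  rcases eq_or_ne y 0 with rfl | hy
  · simp [h.1]
  obtain ⟨φ, hφ⟩ := exists_suppFunc (𝕜 := 𝕜) hy
  rw [h.2 _ y φ hφ, h.2 x y φ hφ, map_smul, smul_eq_mul, mul_left_comm]

theorem exists_eq_smul_of_forall_sip_eq_zero (h : IsCompatSIP 𝕜 sip) {u v : E}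
    (huv : ∀ w, sip u w = 0 → sip v w = 0) : ∃ c : 𝕜, v = c • u := by
  by_contra! hv
  obtain ⟨t, ht⟩ := exists_bjOrth_add_smul (𝕜 := 𝕜) v u
  have hw : v + t • u ≠ 0 := fun h0 => hv (-t) (by rw [neg_smul, eq_neg_iff_add_eq_zero, h0])
  obtain ⟨φ, hφ, hφu⟩ := ht.exists_suppFunc_eq_zero hw
  have hφv : φ v = 0 := by
    have hsip := huv _ (by rw [h.2 u _ φ hφ, hφu, mul_zero])
    rw [h.2 v _ φ hφ] at hsip
    exact (mul_eq_zero.1 hsip).resolve_left (by simpa using hw)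
  have hφw := hφ.2
  rw [map_add, map_smul, hφv, hφu, smul_zero, add_zero, eq_comm, RCLike.ofReal_eq_zero,
    norm_eq_zero] at hφw
  exact hw hφw

end IsCompatSIP

end NormedSpace

theorem stmt7_general {𝕜 : Type*} [RCLike 𝕜] {X Y : Type*} [NormedAddCommGroup X] [NormedSpace 𝕜 X]
    [NormedAddCommGroup Y] [NormedSpace 𝕜 Y]
    (sipX : X → X → 𝕜) (hX : IsCompatSIP 𝕜 sipX)
    (sipY : Y → Y → 𝕜) (hY : IsCompatSIP 𝕜 sipY)
    (f : X → Y) (hsurj : Function.Surjective f)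
    (hf : ∀ x y : X, ‖sipY (f x) (f y)‖ = ‖sipX x y‖) :
    ∀ (l : 𝕜) (x : X), ∃ γ : 𝕜, ‖γ‖ = ‖l‖ ∧ f (l • x) = γ • f x := by
  have hnorm (z : X) : ‖f z‖ = ‖z‖ := by
    have hz := hf z z
    rw [hY.norm_sip_self, hX.norm_sip_self] at hz
    exact (pow_left_inj₀ (norm_nonneg _) (norm_nonneg _) two_ne_zero).1 hz
  intro l x
  rcases eq_or_ne x 0 with rfl | hx
  · have hf0 : f 0 = 0 := norm_eq_zero.1 ((hnorm 0).trans norm_zero)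
    exact ⟨l, rfl, by rw [smul_zero, hf0, smul_zero]⟩
  obtain ⟨γ, hγ⟩ := hY.exists_eq_smul_of_forall_sip_eq_zero (u := f x) (v := f (l • x)) <| by
    intro w hw
    obtain ⟨y, rfl⟩ := hsurj w
    rw [← norm_eq_zero, hf] at hw ⊢
    rw [hX.sip_smul_left, norm_mul, hw, mul_zero]
  refine ⟨γ, ?_, hγ⟩
  have hnorms := congrArg norm hγ
  simp only [hnorm, norm_smul] at hnorms
  exact (mul_right_cancel₀ (norm_ne_zero_iff.2 hx) hnorms).symm

theorem stmt7 {𝕜 : Type*} [RCLike 𝕜] {X Y : Type*} [NormedAddCommGroup X] [NormedSpace 𝕜 X]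
    [NormedAddCommGroup Y] [NormedSpace 𝕜 Y]
    (hsmX : NormSmooth 𝕜 X) (hsmY : NormSmooth 𝕜 Y)
    (sipX : X → X → 𝕜) (hX : IsCompatSIP 𝕜 sipX)
    (sipY : Y → Y → 𝕜) (hY : IsCompatSIP 𝕜 sipY)
    (f : X → Y) (hsurj : Function.Surjective f)
    (hf : ∀ x y : X, ‖sipY (f x) (f y)‖ = ‖sipX x y‖) :
    ∀ (l : 𝕜) (x : X), ∃ γ : 𝕜, ‖γ‖ = ‖l‖ ∧ f (l • x) = γ • f x :=
  stmt7_general sipX hX sipY hY f hsurj hf
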